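/- arXiv:2102.11104 — 7 statements merged into one kernel-verified Lean document; each statement's English description precedes it below -/
import Mathlib

section
/- Let r ≥ 2 be an integer and let G be a finite simple graph on n vertices that contains no copy of the complete graph K_{r+1}. If the minimum degree of G is strictly greater than (1 - 1/(r - 1/3))·n, then G is r-colourable. -/
open SimpleGraph

/-- **Andrásfai–Erdős–Sós theorem.** If `G` is a `K_{r+1}`-free graph on `n` vertices
with minimum degree strictly greater than `(1 - 1/(r - 1/3)) * n`, then `G` is
`r`-colourable. -/
theorem statement0 {V : Type*} [Fintype V] (r : ℕ) (hr : 2 ≤ r)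
    (G : SimpleGraph V) [DecidableRel G.Adj]
    (hfree : G.CliqueFree (r + 1))
    (hdeg : (1 - 1 / ((r : ℝ) - 1 / 3)) * (Fintype.card V : ℝ) < (G.minDegree : ℝ)) :
    G.Colorable r := by
  refine colorable_of_cliqueFree_lt_minDegree hfree ?_
  have hcoeff : (((3 * r - 4) * Fintype.card V : ℕ) : ℝ) / (3 * r - 1 : ℕ) =
      (1 - 1 / ((r : ℝ) - 1 / 3)) * Fintype.card V := by
    have hr' : (2 : ℝ) ≤ r := by exact_mod_cast hr
    have h₁ : (3 * r - 1 : ℝ) ≠ 0 := by linarith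
    have h₂ : (r - 1 / 3 : ℝ) ≠ 0 := by linarith
    push_cast [Nat.cast_sub (by omega : 4 ≤ 3 * r), Nat.cast_sub (by omega : 1 ≤ 3 * r)]
    field_simp
    ring
  exact_mod_cast Nat.cast_div_le.trans_lt (hcoeff ▸ hdeg)
end

section
/- Let g ≥ 2 be an integer and let G be a non-bipartite simple graph on n vertices with minimum degree strictly greater than (2/(2g+1))·n. Then G contains an odd cycle of length less than 2g+1. -/
/-!
A shortest odd closed walk `C` is a cycle, since cutting it at a repeated vertex would leave a
shorter odd closed walk. If its length `m` is at least `2g + 1 ≥ 5`, every vertex has at most two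
neighbours on `C`, so double counting the edges between `C` and `V` gives `m δ ≤ 2n`, which
contradicts `δ > 2n / (2g + 1)`.
-/

open Finset SimpleGraph

namespace SimpleGraph

variable {V : Type*} {G : SimpleGraph V}

namespace Walk

lemma length_takeUntil_add_length_dropUntil [DecidableEq V] {u v w : V} (p : G.Walk u v)
    (h : w ∈ p.support) : (p.takeUntil w h).length + (p.dropUntil w h).length = p.length := by
  rw [← length_append, take_spec]

lemma IsCycle.card_support_toFinset [DecidableEq V] {v : V} {c : G.Walk v v} (hc : c.IsCycle) :
    #c.support.toFinset = c.length := by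
  rw [← cons_tail_support, List.toFinset_cons,
    Finset.insert_eq_of_mem (List.mem_toFinset.mpr (c.end_mem_tail_support hc.not_nil)),
    List.toFinset_card_of_nodup hc.support_nodup, List.length_tail, length_support,
    Nat.add_sub_cancel]

lemma exists_loops_of_duplicate {v x : V} (c : G.Walk v v)
    (hx : List.Duplicate x c.support.tail) :
    ∃ p q : G.Walk x x, 0 < p.length ∧ 0 < q.length ∧ p.length + q.length = c.length := by
  classical
  have hxc : x ∈ c.support := List.mem_of_mem_tail hx.mem
  have hdup : 2 ≤ (c.rotate x hxc).support.tail.count x := by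
    rw [(c.support_rotate x hxc).perm.count_eq]
    exact List.duplicate_iff_two_le_count.mp hx
  have hlen := c.length_rotate x hxc
  cases hrot : c.rotate x hxc with
  | nil => simp [hrot] at hdup
  | cons hxy r =>
    rw [hrot, support_cons, List.tail_cons] at hdup
    rw [hrot, length_cons] at hlen
    have hxr : x ∈ r.support := List.count_pos_iff.mp (by omega)
    have hsupp : r.support = (r.takeUntil x hxr).support ++ (r.dropUntil x hxr).support.tail := by
      rw [← support_append, take_spec]
    have hdrop : 0 < (r.dropUntil x hxr).length := by
      rw [← not_nil_iff_lt_length]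
      intro hnil
      rw [hnil.eq_nil, support_nil, List.tail_cons, List.append_nil] at hsupp
      rw [hsupp, r.count_support_takeUntil_eq_one hxr] at hdup
      omega
    refine ⟨cons hxy (r.takeUntil x hxr), r.dropUntil x hxr, by simp, hdrop, ?_⟩
    rw [length_cons, ← hlen, ← r.length_takeUntil_add_length_dropUntil hxr]
    omega

lemma isCycle_of_odd_of_forall_odd_le {v : V} {c : G.Walk v v} (hodd : Odd c.length)
    (hmin : ∀ (w : V) (p : G.Walk w w), Odd p.length → c.length ≤ p.length) : c.IsCycle := by
  have hne : ¬ c.Nil := not_nil_iff_lt_length.mpr hodd.pos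
  rw [isCycle_iff_isPath_tail_and_le_length, isPath_def, support_tail_of_not_nil c hne]
  constructor
  · by_contra hdup
    obtain ⟨x, hx⟩ := List.exists_duplicate_iff_not_nodup.mpr hdup
    obtain ⟨p, q, hp, hq, hpq⟩ := c.exists_loops_of_duplicate hx
    have hp' := hmin x p
    have hq' := hmin x q
    simp only [Nat.odd_iff] at hodd hp' hq'
    omega
  · have hne1 : c.length ≠ 1 := fun h => (adj_of_length_eq_one h).ne rfl
    rw [Nat.odd_iff] at hodd
    omega

lemma exists_three_arcs {v a b d : V} (c : G.Walk v v) (ha : a ∈ c.support)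
    (hb : b ∈ c.support) (hd : d ∈ c.support) :
    ∃ (p : G.Walk a b) (q : G.Walk b d) (r : G.Walk d a),
      p.length + q.length + r.length = c.length := by
  classical
  set c' := c.rotate a ha
  have hb' : b ∈ c'.support := (c.mem_support_rotate_iff a ha).mpr hb
  have hd' : d ∈ c'.support := (c.mem_support_rotate_iff a ha).mpr hd
  have hlen : (c'.takeUntil b hb').length + (c'.dropUntil b hb').length = c.length := by
    rw [c'.length_takeUntil_add_length_dropUntil, length_rotate]
  rw [← take_spec c' hb', mem_support_append_iff] at hd'
  rcases hd' with hd' | hd'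
  · refine ⟨(c'.dropUntil b hb').reverse, ((c'.takeUntil b hb').dropUntil d hd').reverse,
      ((c'.takeUntil b hb').takeUntil d hd').reverse, ?_⟩
    simp only [length_reverse]
    have := (c'.takeUntil b hb').length_takeUntil_add_length_dropUntil hd'
    omega
  · refine ⟨c'.takeUntil b hb', (c'.dropUntil b hb').takeUntil d hd',
      (c'.dropUntil b hb').dropUntil d hd', ?_⟩
    have := (c'.dropUntil b hb').length_takeUntil_add_length_dropUntil hd'
    omega

end Walk

lemma exists_odd_loop_forall_odd_le (h : ¬ G.Colorable 2) :
    ∃ (v : V) (c : G.Walk v v), Odd c.length ∧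
      ∀ (w : V) (p : G.Walk w w), Odd p.length → c.length ≤ p.length := by
  classical
  have hex : ∃ n, ∃ (v : V) (c : G.Walk v v), Odd c.length ∧ c.length = n := by
    simpa [two_colorable_iff_forall_loop_even] using h
  obtain ⟨v, c, hodd, hlen⟩ := Nat.find_spec hex
  exact ⟨v, c, hodd, fun w p hp => hlen ▸ Nat.find_min' hex ⟨w, p, hp, rfl⟩⟩

lemma le_length_add_two_of_adj_of_adj {m : ℕ}
    (hmin : ∀ (w : V) (p : G.Walk w w), Odd p.length → m ≤ p.length) {u x y : V}
    (hx : G.Adj u x) (hy : G.Adj u y) (p : G.Walk x y) (hp : Odd p.length) :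
    m ≤ p.length + 2 := by
  have hloop : (Walk.cons hx (p.concat hy.symm)).length = p.length + 2 := by
    rw [Walk.length_cons, Walk.length_concat]
  exact hloop ▸ hmin u _ (hloop ▸ hp.add_even even_two)

/-- Three neighbours of `u` on `c` cut it into three arcs; closing an arc, or the union of two,
through `u` adds 2 to its length, and the parities of the arcs then contradict minimality once
`c.length ≥ 5`. -/
lemma card_filter_adj_support_le_two [DecidableEq V] [DecidableRel G.Adj] {v : V}
    {c : G.Walk v v} (hodd : Odd c.length) (h5 : 5 ≤ c.length)
    (hmin : ∀ (w : V) (p : G.Walk w w), Odd p.length → c.length ≤ p.length) (u : V) :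
    #{x ∈ c.support.toFinset | G.Adj u x} ≤ 2 := by
  by_contra! h
  obtain ⟨a, ha, b, hb, d, hd, hab, had, hbd⟩ := two_lt_card.mp h
  simp only [Finset.mem_filter, List.mem_toFinset] at ha hb hd
  obtain ⟨p, q, r, hlen⟩ := c.exists_three_arcs ha.1 hb.1 hd.1
  have key : ∀ {x y : V}, G.Adj u x → G.Adj u y → ∀ w : G.Walk x y,
      w.length % 2 = 1 → c.length ≤ w.length + 2 := fun hx hy w hw =>
    le_length_add_two_of_adj_of_adj hmin hx hy w (Nat.odd_iff.mpr hw)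
  have hp := key ha.2 hb.2 p
  have hq := key hb.2 hd.2 q
  have hr := key hd.2 ha.2 r
  have hpq := key ha.2 hd.2 (p.append q)
  have hqr := key hb.2 ha.2 (q.append r)
  have hrp := key hd.2 hb.2 (r.append p)
  simp only [Walk.length_append] at hpq hqr hrp
  have hp0 := Walk.not_nil_iff_lt_length.mp (p.not_nil_of_ne hab)
  have hq0 := Walk.not_nil_iff_lt_length.mp (q.not_nil_of_ne hbd)
  have hr0 := Walk.not_nil_iff_lt_length.mp (r.not_nil_of_ne had.symm)
  rw [Nat.odd_iff] at hodd
  omega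

lemma card_mul_minDegree_le [Fintype V] [DecidableRel G.Adj] (s : Finset V) (k : ℕ)
    (h : ∀ u, #{x ∈ s | G.Adj u x} ≤ k) : #s * G.minDegree ≤ k * Fintype.card V := by
  rw [mul_comm k, ← Finset.card_univ]
  refine Finset.card_mul_le_card_mul G.Adj (fun x _ => ?_) (fun u _ => ?_)
  · rw [Finset.bipartiteAbove, ← neighborFinset_eq_filter, card_neighborFinset_eq_degree]
    exact G.minDegree_le_degree x
  · simpa only [Finset.bipartiteBelow, G.adj_comm _ u] using h u

end SimpleGraph

/-- (Häggkvist) A non-bipartite graph on `n` vertices with minimum degree strictly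
greater than `(2/(2g+1)) * n` contains an odd cycle of length less than `2g + 1`. -/
theorem statement2 {V : Type*} [Fintype V] (g : ℕ) (hg : 2 ≤ g)
    (G : SimpleGraph V) [DecidableRel G.Adj]
    (hnb : ¬ G.Colorable 2)
    (hdeg : (2 / (2 * (g : ℝ) + 1)) * (Fintype.card V : ℝ) < (G.minDegree : ℝ)) :
    ∃ (v : V) (w : G.Walk v v), w.IsCycle ∧ Odd w.length ∧ w.length < 2 * g + 1 := by
  classical
  obtain ⟨v, c, hodd, hmin⟩ := exists_odd_loop_forall_odd_le hnb
  have hcyc := Walk.isCycle_of_odd_of_forall_odd_le hodd hmin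
  refine ⟨v, c, hcyc, hodd, ?_⟩
  by_contra! hlong
  have hcount := card_mul_minDegree_le c.support.toFinset 2
    (card_filter_adj_support_le_two hodd (by omega) hmin)
  rw [hcyc.card_support_toFinset] at hcount
  have hlong' : 2 * (g : ℝ) + 1 ≤ c.length := by exact_mod_cast hlong
  have hcount' : (c.length : ℝ) * G.minDegree ≤ 2 * Fintype.card V := by exact_mod_cast hcount
  rw [div_mul_eq_mul_div, div_lt_iff₀ (by positivity)] at hdeg
  nlinarith [(G.minDegree.cast_nonneg : (0 : ℝ) ≤ G.minDegree)]
end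

section
/- Let k be a positive integer, let F be a simple graph on m vertices that is not k-colourable, and let n ≥ m. Let G be a balanced blow-up of F on n vertices. Then any spanning subgraph of G obtained by deleting fewer than ⌊n/m⌋² edges is not k-colourable. -/
/-!
A choice function `f : ∀ v, Fin (s v)` picks one vertex from every part of the blow-up, and these
vertices span a copy of `F`. If no deleted edge has both ends on this copy, then a `k`-colouring of
the subgraph restricts to a `k`-colouring of `F`. By balance every part has at least `⌊n/m⌋`
vertices, so a deleted edge between parts `u ≠ v` kills a fraction `1 / (s u * s v) ≤ 1 / ⌊n/m⌋ ^ 2`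
of all choice functions, and fewer than `⌊n/m⌋ ^ 2` deleted edges cannot kill all of them.
-/

open SimpleGraph

/-- The blow-up of a graph `F` in which each vertex `v` is replaced by an
independent set of size `s v`, and each edge by a complete bipartite graph. -/
def Blowup {α : Type*} (F : SimpleGraph α) (s : α → ℕ) :
    SimpleGraph (Σ v : α, Fin (s v)) where
  Adj x y := F.Adj x.1 y.1
  symm := ⟨fun _ _ h => F.adj_symm h⟩
  loopless := ⟨fun x h => F.loopless.irrefl x.1 h⟩

open Finset Fintype

section PiSections

variable {ι : Type*} [Fintype ι] [DecidableEq ι] {β : ι → Type*} [∀ i, DecidableEq (β i)]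

lemma card_filter_piFinset_apply_eq_mul_card (S : ∀ i, Finset (β i)) (i : ι) {a : β i}
    (ha : a ∈ S i) : #{f ∈ piFinset S | f i = a} * #(S i) = #(piFinset S) := by
  rw [card_filter_piFinset_eq_of_mem S i ha, prod_erase_mul _ _ (mem_univ i), card_piFinset]

variable [∀ i, Fintype (β i)]

lemma card_filter_apply_eq_and_apply_eq_mul {i j : ι} (hij : i ≠ j) (x : β i) (y : β j) :
    #{f : ∀ v, β v | f i = x ∧ f j = y} * (Fintype.card (β i) * Fintype.card (β j)) =
      Fintype.card (∀ v, β v) := by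
  let U : ∀ v, Finset (β v) := fun _ => univ
  have hy : y ∈ Function.update U i {x} j := by simp [U, Function.update_of_ne hij.symm]
  have hi := card_filter_piFinset_apply_eq_mul_card U i (mem_univ x)
  have hj := card_filter_piFinset_apply_eq_mul_card _ j hy
  rw [piFinset_update_singleton_eq_filter_piFinset_eq U i (mem_univ x), filter_filter,
    Function.update_of_ne hij.symm] at hj
  simp only [U, piFinset_univ, Finset.card_univ] at hi hj
  rw [← hi, ← hj]
  ring

lemma exists_section_avoiding {t : ℕ} (ht : ∀ i, t ≤ Fintype.card (β i))
    (D : Finset (Sym2 (Σ i, β i))) (hD : ∀ a b, s(a, b) ∈ D → a.1 ≠ b.1) (hcard : #D < t ^ 2) :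
    ∃ f : ∀ i, β i, ∀ e ∈ D, ∃ x ∈ e, f x.1 ≠ x.2 := by
  by_contra! hbad
  set N := Fintype.card (∀ i, β i)
  let through (e : Sym2 (Σ i, β i)) : Finset (∀ i, β i) := {f | ∀ x ∈ e, f x.1 = x.2}
  have hthrough : ∀ e ∈ D, #(through e) * t ^ 2 ≤ N := by
    intro e he
    induction e using Sym2.ind with
    | _ a b =>
      simp only [through, Sym2.mem_iff, forall_eq_or_imp, forall_eq]
      calc _ ≤ #{f : ∀ i, β i | f a.1 = a.2 ∧ f b.1 = b.2} *
              (Fintype.card (β a.1) * Fintype.card (β b.1)) := by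
            rw [sq]; gcongr <;> apply ht
        _ = N := card_filter_apply_eq_and_apply_eq_mul (hD a b he) a.2 b.2
  have hcover : univ ⊆ D.biUnion through := fun f _ => by
    obtain ⟨e, he, hfe⟩ := hbad f
    exact mem_biUnion.2 ⟨e, he, mem_filter.2 ⟨mem_univ f, hfe⟩⟩
  have hN : 0 < N := by
    have ht0 : 0 < t := Nat.pos_of_ne_zero (by rintro rfl; simp at hcard)
    simp only [N, Fintype.card_pi]
    exact prod_pos fun i _ => ht0.trans_le (ht i)
  have : N * t ^ 2 ≤ #D * N :=
    calc N * t ^ 2 ≤ (∑ e ∈ D, #(through e)) * t ^ 2 := by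
          gcongr
          exact Finset.card_univ.symm.le.trans ((card_le_card hcover).trans card_biUnion_le)
      _ ≤ ∑ _e ∈ D, N := by rw [sum_mul]; exact sum_le_sum hthrough
      _ = #D * N := by rw [sum_const, smul_eq_mul]
  nlinarith

end PiSections

lemma div_card_le_of_forall_le_add_one {α : Type*} [Fintype α] {s : α → ℕ}
    (hbal : ∀ u v, s u ≤ s v + 1) (v : α) : (∑ u, s u) / Fintype.card α ≤ s v := by
  have hlt : ∑ u, s u < (s v + 1) * Fintype.card α := by
    simpa [mul_comm] using
      sum_lt_sum (fun u _ => hbal u v) ⟨v, mem_univ v, Nat.lt_succ_self (s v)⟩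
  exact Nat.lt_succ_iff.1 ((Nat.div_lt_iff_lt_mul (Fintype.card_pos_iff.2 ⟨v⟩)).2 hlt)

theorem statement4_general {α : Type*} [Fintype α] (k : ℕ)
    (F : SimpleGraph α) (hF : ¬ F.Colorable k)
    (n : ℕ)
    (s : α → ℕ) (hsum : ∑ v, s v = n)
    (hbal : ∀ u v : α, s u ≤ s v + 1)
    (G' : SimpleGraph (Σ v : α, Fin (s v)))
    (hdel : ((Blowup F s).edgeSet \ G'.edgeSet).ncard < (n / Fintype.card α) ^ 2) :
    ¬ G'.Colorable k := by
  classical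
  intro hcol
  set D := ((Blowup F s).edgeSet \ G'.edgeSet).toFinset
  have hparts : ∀ v, n / Fintype.card α ≤ Fintype.card (Fin (s v)) := fun v => by
    simpa [hsum] using div_card_le_of_forall_le_add_one hbal v
  have hD : ∀ a b, s(a, b) ∈ D → a.1 ≠ b.1 := fun a b he =>
    F.ne_of_adj (Set.mem_toFinset.1 he).1
  obtain ⟨f, hf⟩ := exists_section_avoiding hparts D hD
    (by rwa [Set.ncard_eq_toFinset_card'] at hdel)
  refine hF (hcol.of_hom ⟨fun v => ⟨v, f v⟩, fun {u v} huv => ?_⟩)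
  by_contra hG
  obtain ⟨x, hx, hfx⟩ := hf s(⟨u, f u⟩, ⟨v, f v⟩) (Set.mem_toFinset.2 ⟨huv, hG⟩)
  rcases Sym2.mem_iff.1 hx with rfl | rfl <;> exact hfx rfl

/-- If `F` on `m` vertices is not `k`-colourable and `G` is a balanced blow-up of `F` on
`n ≥ m` vertices, then any spanning subgraph of `G` obtained by deleting fewer than
`⌊n/m⌋ ^ 2` edges is not `k`-colourable. -/
theorem statement4 {α : Type*} [Fintype α] (k : ℕ) (hk : 0 < k)
    (F : SimpleGraph α) (hF : ¬ F.Colorable k)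
    (n : ℕ) (hn : Fintype.card α ≤ n)
    (s : α → ℕ) (hpos : ∀ v, 1 ≤ s v) (hsum : ∑ v, s v = n)
    (hbal : ∀ u v : α, s u ≤ s v + 1)
    (G' : SimpleGraph (Σ v : α, Fin (s v))) (hle : G' ≤ Blowup F s)
    (hdel : ((Blowup F s).edgeSet \ G'.edgeSet).ncard < (n / Fintype.card α) ^ 2) :
    ¬ G'.Colorable k :=
  statement4_general k F hF n s hsum hbal G' hdel
end

section
/- Let H be a simple graph. For every ε > 0 there exists N such that every H-free graph G on n ≥ N vertices has a spanning subgraph G′ with e(G) − e(G′) ≤ ε·n² such that there is no graph homomorphism from H to G′. -/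
/-!
Apply Szemerédi's regularity lemma with a uniformity parameter `u` that is tiny compared with
`(δ / 2) ^ |H|`, where `δ` is of order `ε`, and let `G'` keep only the edges of `G` that run between
`u`-uniform pairs of parts of density at least `δ`. The deleted edges (inside parts, in
non-uniform pairs, in sparse pairs) number at most `ε n²`.

A homomorphism `H → G'` sends every edge of `H` to a dense uniform pair of parts, and then a copy
of `H` in `G` is found greedily: embed the vertices of `H` one at a time, keeping for every vertex
its candidates, the vertices of its part adjacent to the images of its embedded neighbours.
By uniformity, for each neighbour at most `u |part|` choices of the next image cut its candidate
set below a `δ / 2` fraction of its size, so candidate sets never drop below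
`(δ / 2) ^ |H| · |part|`, which exceeds the number of forbidden choices. As `G` is `H`-free, no
such homomorphism exists.
-/

open SimpleGraph

/-- `H` has a copy in `G`: an injective graph homomorphism from `H` to `G`,
i.e. `G` contains a subgraph isomorphic to `H`. -/
def Copies {α β : Type*} (H : SimpleGraph α) (G : SimpleGraph β) : Prop :=
  ∃ f : H →g G, Function.Injective f

open Finset Fintype

namespace SimpleGraph

section Uniform

variable {β : Type*} {G : SimpleGraph β} [DecidableRel G.Adj] {ε δ : ℝ} {X Y Y' : Finset β}

lemma IsUniform.card_filter_card_filter_adj_lt_le (hXY : G.IsUniform ε X Y)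
    (hδ : δ ≤ G.edgeDensity X Y) (hY' : Y' ⊆ Y) (hY'card : #Y * ε ≤ #Y') :
    (#{x ∈ X | #{y ∈ Y' | G.Adj x y} < (δ - ε) * #Y'} : ℝ) ≤ ε * #X := by
  classical
  set B := {x ∈ X | (#{y ∈ Y' | G.Adj x y} : ℝ) < (δ - ε) * #Y'}
  by_contra! hB
  obtain ⟨x₀, hx₀⟩ : B.Nonempty := by
    rw [← card_pos]
    exact_mod_cast (mul_nonneg hXY.pos.le (Nat.cast_nonneg _)).trans_lt hB
  have hpos : 0 < (δ - ε) * #Y' := (Nat.cast_nonneg _).trans_lt (mem_filter.1 hx₀).2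
  have hedges : (#(G.interedges B Y') : ℝ) ≤ #B * ((δ - ε) * #Y') := by
    rw [interedges, Rel.interedges_eq_biUnion]
    refine (Nat.cast_le.2 card_biUnion_le).trans ?_
    rw [Nat.cast_sum]
    simp_rw [card_map]
    exact (sum_le_card_nsmul _ _ _ fun x hx ↦ (mem_filter.1 hx).2.le).trans_eq (nsmul_eq_mul _ _)
  have hdens : (G.edgeDensity B Y' : ℝ) ≤ δ - ε := by
    rw [edgeDensity_def]
    push_cast
    refine div_le_of_le_mul₀ (by positivity) (pos_of_mul_pos_left hpos (Nat.cast_nonneg _)).le ?_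
    linarith
  have := hXY (filter_subset _ _) hY' (by rw [mul_comm]; exact hB.le) hY'card
  rw [abs_sub_lt_iff] at this
  linarith

end Uniform

section RegularityReduced

variable {β : Type*} [DecidableEq β] {G : SimpleGraph β} [DecidableRel G.Adj] {A : Finset β}
  {P : Finpartition A} {u δ η : ℝ}

lemma filter_adj_not_regularityReduced_subset :
    (A ×ˢ A).filter (fun (x, y) ↦ G.Adj x y ∧ ¬ (G.regularityReduced P u δ).Adj x y) ⊆
      (P.nonUniforms G u).biUnion (fun (U, V) ↦ U ×ˢ V) ∪ P.parts.biUnion offDiag ∪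
        (P.sparsePairs G δ).biUnion fun (U, V) ↦ G.interedges U V := by
  rintro ⟨x, y⟩
  simp only [mem_filter, regularityReduced_adj, not_and, not_exists, not_le, mem_biUnion,
    mem_union, mem_product, Prod.exists, mem_offDiag, and_imp, or_assoc, and_assoc,
    P.mk_mem_nonUniforms, Finpartition.mk_mem_sparsePairs, mem_interedges_iff]
  intro hx hy hxy hsparse
  obtain ⟨U, hU, hxU⟩ := P.exists_mem hx
  obtain ⟨V, hV, hyV⟩ := P.exists_mem hy
  obtain rfl | hUV := eq_or_ne U V
  · exact Or.inr (Or.inl ⟨U, hU, hxU, hyV, G.ne_of_adj hxy⟩)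
  by_cases hunif : G.IsUniform u U V
  · exact Or.inr <| Or.inr
      ⟨U, V, hU, hV, hUV, hsparse hxy _ hU _ hV hxU hyV hUV hunif, hxU, hyV, hxy⟩
  · exact Or.inl ⟨U, V, hU, hV, hUV, hunif, hxU, hyV⟩

variable [Fintype β] {P : Finpartition (univ : Finset β)}

lemma ncard_edgeSet_sdiff_regularityReduced_lt [Nonempty β] (hu : 0 < u) (hδ : 0 ≤ δ)
    (hη : 0 < η) (hP : P.IsEquipartition) (hPu : P.IsUniform G u) (hparts : 4 / η ≤ #P.parts) :
    ((G.edgeSet \ (G.regularityReduced P u δ).edgeSet).ncard : ℝ)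
      < (2 * u + η / 4 + 2 * δ) * card β ^ 2 := by
  let R := G.regularityReduced P u δ
  let A := (P.nonUniforms G u).biUnion fun (U, V) ↦ U ×ˢ V
  let B := P.parts.biUnion offDiag
  let C := (P.sparsePairs G δ).biUnion fun (U, V) ↦ G.interedges U V
  have hncard : ((G.edgeSet \ R.edgeSet).ncard : ℝ) = #G.edgeFinset - #R.edgeFinset := by
    rw [← coe_edgeFinset, ← coe_edgeFinset, ← coe_sdiff, Set.ncard_coe_finset,
      cast_card_sdiff (edgeFinset_mono regularityReduced_le)]
  suffices 2 * (#G.edgeFinset - #R.edgeFinset : ℝ) < (4 * u + η / 2 + 4 * δ) * card β ^ 2 by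
    rw [hncard]; linarith
  calc
    _ = (#((univ ×ˢ univ).filter fun (x, y) ↦ G.Adj x y ∧ ¬ R.Adj x y) : ℝ) := by
      rw [univ_product_univ, mul_sub, filter_and_not, cast_card_sdiff]
      · norm_cast
        rw [two_mul_card_edgeFinset, two_mul_card_edgeFinset]
      · gcongr with xy _
        exact fun hxy ↦ regularityReduced_le hxy
    _ ≤ #(A ∪ B ∪ C) := by gcongr; exact filter_adj_not_regularityReduced_subset
    _ ≤ #A + #B + #C := by
      norm_cast; exact (card_union_le _ _).trans (by gcongr; exact card_union_le _ _)
    _ < 4 * u * #(univ : Finset β) ^ 2 + η / 2 * #(univ : Finset β) ^ 2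
          + 4 * δ * #(univ : Finset β) ^ 2 := by
      linarith [hP.sum_nonUniforms_lt univ_nonempty hu hPu, hP.card_biUnion_offDiag_le hη hparts,
        hP.card_interedges_sparsePairs_le (G := G) hδ]
    _ = _ := by rw [card_univ]; ring

end RegularityReduced

section Embedding

variable {α β : Type*} {G : SimpleGraph β} {H : SimpleGraph α} {part : α → Finset β}
  {S : Finset α} {g : α → β} {a v : α} {x y : β}

open Classical in
noncomputable def candidates (G : SimpleGraph β) (H : SimpleGraph α) (part : α → Finset β)
    (S : Finset α) (g : α → β) (a : α) : Finset β :=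
  {y ∈ part a | ∀ b ∈ S, H.Adj a b → G.Adj y (g b)}

lemma mem_candidates :
    y ∈ candidates G H part S g a ↔ y ∈ part a ∧ ∀ b ∈ S, H.Adj a b → G.Adj y (g b) := by
  simp [candidates]

lemma candidates_subset : candidates G H part S g a ⊆ part a := fun _ hy ↦ (mem_candidates.1 hy).1

@[simp] lemma candidates_empty : candidates G H part ∅ g a = part a := by
  ext; simp [mem_candidates]

lemma mem_candidates_insert_update [DecidableEq α] (hv : v ∉ S) :
    y ∈ candidates G H part (insert v S) (Function.update g v x) a ↔
      y ∈ candidates G H part S g a ∧ (H.Adj a v → G.Adj y x) := by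
  have hg : ∀ b ∈ S, Function.update g v x b = g b :=
    fun b hb ↦ Function.update_of_ne (ne_of_mem_of_not_mem hb hv) _ _
  simp only [mem_candidates, forall_mem_insert, Function.update_self]
  constructor
  · rintro ⟨hy, hyx, hyS⟩
    exact ⟨⟨hy, fun b hb hab ↦ hg b hb ▸ hyS b hb hab⟩, hyx⟩
  · rintro ⟨⟨hy, hyS⟩, hyx⟩
    exact ⟨hy, hyx, fun b hb hab ↦ (hg b hb).symm ▸ hyS b hb hab⟩

structure IsPartialEmbedding (G : SimpleGraph β) (H : SimpleGraph α) (part : α → Finset β)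
    (S : Finset α) (g : α → β) (L : ℝ) : Prop where
  injOn : Set.InjOn g S
  map_adj : ∀ a ∈ S, ∀ b ∈ S, H.Adj a b → G.Adj (g a) (g b)
  le_card_candidates : ∀ a, L ≤ #(candidates G H part S g a)

variable [DecidableEq β] [DecidableRel G.Adj]

lemma IsPartialEmbedding.insert [DecidableEq α] {c L : ℝ}
    (h : IsPartialEmbedding G H part S g L) (hv : v ∉ S) (hc₀ : 0 ≤ c) (hc₁ : c ≤ 1) (hL : 0 ≤ L)
    (hx : x ∈ candidates G H part S g v) (hxg : x ∉ S.image g)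
    (hxa : ∀ a, H.Adj v a →
      c * #(candidates G H part S g a) ≤ #{y ∈ candidates G H part S g a | G.Adj x y}) :
    IsPartialEmbedding G H part (insert v S) (Function.update g v x) (c * L) := by
  classical
  have hg : Set.EqOn (Function.update g v x) g S :=
    fun b hb ↦ Function.update_of_ne (ne_of_mem_of_not_mem hb hv) _ _
  have hxS : ∀ b ∈ S, H.Adj v b → G.Adj x (g b) := (mem_candidates.1 hx).2
  refine ⟨?_, ?_, fun a ↦ ?_⟩
  · rw [coe_insert, Set.injOn_insert (by simpa using hv), Function.update_self,
      Set.image_congr hg]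
    exact ⟨h.injOn.congr hg.symm, by simpa using hxg⟩
  · simp only [forall_mem_insert, Function.update_self]
    refine ⟨⟨fun hvv ↦ absurd hvv (H.irrefl), fun b hb hvb ↦ hg hb ▸ hxS b hb hvb⟩,
      fun a ha ↦ ⟨fun hav ↦ hg ha ▸ (hxS a ha hav.symm).symm, fun b hb hab ↦ ?_⟩⟩
    rw [hg ha, hg hb]
    exact h.map_adj a ha b hb hab
  · by_cases hav : H.Adj a v
    · calc c * L ≤ c * #(candidates G H part S g a) := by gcongr; exact h.le_card_candidates a
        _ ≤ #{y ∈ candidates G H part S g a | G.Adj x y} := hxa a hav.symm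
        _ ≤ _ := by
          gcongr
          intro y hy
          rw [mem_filter] at hy
          exact (mem_candidates_insert_update hv).2 ⟨hy.1, fun _ ↦ hy.2.symm⟩
    · calc c * L ≤ L := mul_le_of_le_one_left hL hc₁
        _ ≤ #(candidates G H part S g a) := h.le_card_candidates a
        _ ≤ _ := by
          gcongr
          intro y hy
          exact (mem_candidates_insert_update hv).2 ⟨hy, fun h ↦ absurd h hav⟩

variable [Fintype α] {δ u : ℝ} {M : ℕ}

lemma exists_mem_candidates_forall_le_card_filter_adj (hu : 0 ≤ u)
    (hunif : ∀ a b, H.Adj a b → G.IsUniform u (part a) (part b))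
    (hdens : ∀ a b, H.Adj a b → δ ≤ G.edgeDensity (part a) (part b))
    (hM : ∀ a, #(part a) ≤ M) (hv : v ∉ S)
    (hcand : ∀ a, card α * (u * M) + card α ≤ #(candidates G H part S g a)) :
    ∃ x ∈ candidates G H part S g v, x ∉ S.image g ∧ ∀ a, H.Adj v a →
      (δ - u) * #(candidates G H part S g a) ≤ #{y ∈ candidates G H part S g a | G.Adj x y} := by
  classical
  let bad a := {x ∈ part v | #{y ∈ candidates G H part S g a | G.Adj x y}
    < (δ - u) * #(candidates G H part S g a)}
  let nbrs : Finset α := {a | H.Adj v a}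
  let badUnion := nbrs.biUnion bad
  have ht : (1 : ℝ) ≤ card α := by exact_mod_cast Fintype.card_pos_iff.2 ⟨v⟩
  have hcard_bad : ∀ a, H.Adj v a → (#(bad a) : ℝ) ≤ u * M := fun a hva ↦
    calc (#(bad a) : ℝ) ≤ u * #(part v) := by
          refine (hunif v a hva).card_filter_card_filter_adj_lt_le (hdens v a hva)
            candidates_subset ?_
          have : (#(part a) : ℝ) ≤ M := by exact_mod_cast hM a
          nlinarith [hcand a, mul_nonneg hu (Nat.cast_nonneg M)]
      _ ≤ u * M := by gcongr; exact hM v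
  have hcard_badUnion : (#badUnion : ℝ) ≤ card α * (u * M) :=
    calc (#badUnion : ℝ) ≤ ∑ a ∈ nbrs, (#(bad a) : ℝ) := by
          exact_mod_cast card_biUnion_le
      _ ≤ ∑ a ∈ nbrs, u * M := sum_le_sum fun a ha ↦ hcard_bad a (mem_filter.1 ha).2
      _ ≤ card α * (u * M) := by
          rw [sum_const, nsmul_eq_mul]; gcongr; exact_mod_cast card_filter_le _ _
  have hcard_used : (#(S.image g) : ℝ) < card α :=
    mod_cast card_image_le.trans_lt (card_lt_univ_of_notMem hv)
  have hcard_union : (#(S.image g ∪ badUnion) : ℝ) ≤ #(S.image g) + #badUnion :=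
    mod_cast card_union_le _ _
  obtain ⟨x, hx, hx_not⟩ := exists_mem_notMem_of_card_lt_card
    (s := S.image g ∪ badUnion) (t := candidates G H part S g v)
    (by exact_mod_cast (by linarith [hcand v] :
      (#(S.image g ∪ badUnion) : ℝ) < #(candidates G H part S g v)))
  refine ⟨x, hx, fun h ↦ hx_not (mem_union_left _ h), fun a hva ↦ ?_⟩
  by_contra! hlt
  exact hx_not (mem_union_right _ (mem_biUnion.2
    ⟨a, mem_filter.2 ⟨mem_univ _, hva⟩, mem_filter.2 ⟨candidates_subset hx, hlt⟩⟩))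

lemma exists_isPartialEmbedding [Nonempty β] [DecidableEq α] {m : ℕ} (hu : 0 ≤ u)
    (huδ : u ≤ δ / 2) (hδ : δ ≤ 2)
    (hunif : ∀ a b, H.Adj a b → G.IsUniform u (part a) (part b))
    (hdens : ∀ a b, H.Adj a b → δ ≤ G.edgeDensity (part a) (part b))
    (hm : ∀ a, m ≤ #(part a)) (hM : ∀ a, #(part a) ≤ M)
    (hL : card α * (u * M) + card α ≤ (δ / 2) ^ card α * m) (S : Finset α) :
    ∃ g, IsPartialEmbedding G H part S g ((δ / 2) ^ #S * m) := by
  have hδ₀ : 0 ≤ δ / 2 := by linarith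
  induction S using Finset.induction_on with
  | empty =>
    exact ⟨fun _ ↦ Classical.arbitrary β, by simp, by simp, by simpa using hm⟩
  | insert v S hv ih =>
    obtain ⟨g, hg⟩ := ih
    have hcand : ∀ a, card α * (u * M) + card α ≤ #(candidates G H part S g a) := fun a ↦
      calc _ ≤ (δ / 2) ^ card α * m := hL
        _ ≤ (δ / 2) ^ #S * m := mul_le_mul_of_nonneg_right
          (pow_le_pow_of_le_one hδ₀ (by linarith) (card_le_univ S)) (Nat.cast_nonneg m)
        _ ≤ _ := hg.le_card_candidates a
    obtain ⟨x, hx, hxg, hxa⟩ :=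
      exists_mem_candidates_forall_le_card_filter_adj hu hunif hdens hM hv hcand
    refine ⟨Function.update g v x, ?_⟩
    rw [card_insert_of_notMem hv, pow_succ', mul_assoc]
    refine hg.insert hv hδ₀ (by linarith) (by positivity) hx hxg fun a hva ↦ ?_
    exact (mul_le_mul_of_nonneg_right (by linarith) (Nat.cast_nonneg _)).trans (hxa a hva)

theorem copies_of_forall_isUniform_le_edgeDensity [Nonempty β] {m : ℕ} (hu : 0 ≤ u)
    (huδ : u ≤ δ / 2) (hδ : δ ≤ 2)
    (hunif : ∀ a b, H.Adj a b → G.IsUniform u (part a) (part b))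
    (hdens : ∀ a b, H.Adj a b → δ ≤ G.edgeDensity (part a) (part b))
    (hm : ∀ a, m ≤ #(part a)) (hM : ∀ a, #(part a) ≤ M)
    (hL : card α * (u * M) + card α ≤ (δ / 2) ^ card α * m) :
    Copies H G := by
  classical
  obtain ⟨g, hg⟩ := exists_isPartialEmbedding hu huδ hδ hunif hdens hm hM hL univ
  exact ⟨⟨g, fun hab ↦ hg.map_adj _ (mem_univ _) _ (mem_univ _) hab⟩,
    fun a b hab ↦ hg.injOn (by simp) (by simp) hab⟩

theorem copies_of_hom_regularityReduced [Fintype β] [Nonempty β]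
    {P : Finpartition (univ : Finset β)} (hP : P.IsEquipartition) (hu : 0 < u) (huδ : u ≤ δ / 2)
    (hδ : δ ≤ 2) (hup : u ≤ (δ / 2) ^ card α / (4 * (card α + 1)))
    (hc : 2 * (card α + 1) / (δ / 2) ^ card α ≤ (card β / #P.parts : ℕ))
    (f : H →g G.regularityReduced P u δ) : Copies H G := by
  set c := card β / #P.parts
  set t := card α
  set p := (δ / 2) ^ t
  have hp : 0 < p := pow_pos (by linarith) t
  have hpc : 2 * (t + 1) ≤ p * c := by rwa [div_le_iff₀' hp] at hc
  have hc₁ : (1 : ℝ) ≤ c := by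
    have : (0 : ℝ) < c := by by_contra! h; nlinarith
    exact Nat.one_le_cast.2 (Nat.cast_pos.1 this)
  have htu : 4 * (t * u) ≤ p := by
    rw [le_div_iff₀ (by positivity)] at hup
    nlinarith
  have hL : t * (u * (c + 1 : ℕ)) + t ≤ p * c := by
    push_cast
    nlinarith
  have hfU : ∀ a, P.part (f a) ∈ P.parts := fun a ↦ P.part_mem.2 (mem_univ _)
  refine copies_of_forall_isUniform_le_edgeDensity (part := fun a ↦ P.part (f a)) (m := c)
    (M := c + 1) hu.le huδ hδ (fun a b hab ↦ ?_) (fun a b hab ↦ ?_)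
    (fun a ↦ by simpa using hP.average_le_card_part (hfU a))
    (fun a ↦ by simpa using hP.card_part_le_average_add_one (hfU a)) hL
  all_goals
    obtain ⟨-, U, hU, V, hV, haU, hbV, -, hUV, hδUV⟩ := f.map_adj hab
    rw [P.part_eq_of_mem hU haU, P.part_eq_of_mem hV hbV]
  exacts [hUV, hδUV]

end Embedding

end SimpleGraph

/-- For every `ε > 0`, every sufficiently large `H`-free graph `G` on `n` vertices has a
spanning subgraph `G'` with `e(G) - e(G') ≤ ε * n ^ 2` to which `H` is not
homomorphic. -/
theorem statement10 {α : Type*} [Fintype α] (H : SimpleGraph α) (ε : ℝ) (hε : 0 < ε) :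
    ∃ N : ℕ, ∀ n : ℕ, N ≤ n → ∀ G : SimpleGraph (Fin n), ¬ Copies H G →
      ∃ G' : SimpleGraph (Fin n), G' ≤ G ∧
        ((G.edgeSet \ G'.edgeSet).ncard : ℝ) ≤ ε * n ^ 2 ∧ IsEmpty (H →g G') := by
  classical
  set t := card α
  -- `ε₀ ≤ 1` keeps `δ / 2 ≤ 1`, so that the candidate bounds `(δ / 2) ^ k` decrease in `k`.
  set ε₀ := min ε 1
  have hε₀ : 0 < ε₀ := lt_min hε one_pos
  have hε₀ε : ε₀ ≤ ε := min_le_left _ _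
  have hε₀₁ : ε₀ ≤ 1 := min_le_right _ _
  set δ := ε₀ / 4 with hδ
  set p := (δ / 2) ^ t
  set u := min (δ / 2) (p / (4 * (t + 1)))
  have hu : 0 < u := lt_min (by positivity) (by positivity)
  set l := ⌈4 / ε₀⌉₊
  refine ⟨max l (SzemerediRegularity.bound u l * ⌈2 * (t + 1) / p⌉₊), fun n hn G hG ↦ ?_⟩
  have hln : l ≤ n := le_of_max_le_left hn
  have : Nonempty (Fin n) := ⟨⟨0, (Nat.ceil_pos.2 (by positivity)).trans_le hln⟩⟩
  obtain ⟨P, hP, hlP, hPB, hPu⟩ := szemeredi_regularity G hu (by simpa using hln)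
  have hc : ⌈2 * (t + 1) / p⌉₊ ≤ n / #P.parts := by
    rw [Nat.le_div_iff_mul_le ((Nat.ceil_pos.2 (by positivity)).trans_le hlP)]
    exact (Nat.mul_le_mul_left _ hPB).trans (by rw [mul_comm]; exact le_of_max_le_right hn)
  refine ⟨G.regularityReduced P u δ, regularityReduced_le, ?_, ⟨fun f ↦ hG ?_⟩⟩
  · have hloss := ncard_edgeSet_sdiff_regularityReduced_lt (δ := δ) (η := ε₀) hu
      (by positivity) hε₀ hP hPu ((Nat.le_ceil _).trans (by exact_mod_cast hlP))
    rw [Fintype.card_fin] at hloss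
    have hu₂ : 2 * u ≤ δ := by linarith [min_le_left (δ / 2) (p / (4 * (t + 1)))]
    exact hloss.le.trans (mul_le_mul_of_nonneg_right (by linarith) (by positivity))
  · exact copies_of_hom_regularityReduced hP hu (min_le_left _ _)
      (by linarith) (min_le_right _ _)
      (by simpa using (Nat.le_ceil _).trans (Nat.cast_le.2 hc)) f
end

section
/- Let H be a simple graph with chromatic number r + 1 where r ≥ 3. Then there exists a positive integer g such that there is no graph homomorphism from H to the join K_{r−2} + C_{2g+1}. -/
/-!
Take `g` with `2g + 1 > |V(H)|`. A homomorphism `H → K_{r-2} + C_{2g+1}` then misses some vertex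
of the cycle, and a cycle minus a vertex is a path, hence bipartite. So `H` maps into a
graph with an `(r - 2) + 2 = r`-colouring, contradicting `χ(H) = r + 1`.
-/

open SimpleGraph

/-- The join of two simple graphs: disjoint union plus all edges in between. -/
def Join {α β : Type*} (G : SimpleGraph α) (H : SimpleGraph β) : SimpleGraph (α ⊕ β) where
  Adj x y :=
    Sum.elim (fun a => Sum.elim (fun b => G.Adj a b) (fun _ => True) y)
      (fun a => Sum.elim (fun _ => True) (fun b => H.Adj a b) y) x
  symm := by
    constructor
    rintro (a | a) (b | b) h <;>
      first
        | exact trivial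
        | exact G.adj_symm h
        | exact H.adj_symm h
  loopless := by
    constructor
    rintro (a | a) h
    · exact G.loopless.irrefl a h
    · exact H.loopless.irrefl a h

section

variable {α β γ : Type*}

theorem Join.colorable_add {G : SimpleGraph β} {G' : SimpleGraph γ} {a b : ℕ}
    (hG : G.Colorable a) (hG' : G'.Colorable b) : (Join G G').Colorable (a + b) := by
  obtain ⟨c⟩ := hG
  obtain ⟨c'⟩ := hG'
  let C : (Join G G').Coloring (Fin a ⊕ Fin b) := Coloring.mk (Sum.map c c') <| by
    rintro (x | x) (y | y) hxy
    · exact Sum.inl_injective.ne (c.valid hxy)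
    · exact Sum.inl_ne_inr
    · exact Sum.inr_ne_inl
    · exact Sum.inr_injective.ne (c'.valid hxy)
  simpa using C.colorable

theorem Join.deleteIncidenceSet_inr_le (G : SimpleGraph β) (G' : SimpleGraph γ) (x : γ) :
    (Join G G').deleteIncidenceSet (Sum.inr x) ≤ Join G (G'.deleteIncidenceSet x) := by
  rintro (u | u) (v | v) huv <;> rw [deleteIncidenceSet_adj] at huv
  · exact huv.1
  · trivial
  · trivial
  · exact deleteIncidenceSet_adj.2 ⟨huv.1, by simpa using huv.2⟩

namespace SimpleGraph

def Hom.toDeleteIncidenceSet {H : SimpleGraph α} {G : SimpleGraph β} (f : H →g G) (x : β)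
    (hx : ∀ v, f v ≠ x) : H →g G.deleteIncidenceSet x where
  toFun := f
  map_rel' h := deleteIncidenceSet_adj.2 ⟨f.map_adj h, hx _, hx _⟩

theorem cycleGraph_deleteIncidenceSet_colorable_two (n : ℕ) (m : Fin n) :
    ((cycleGraph n).deleteIncidenceSet m).Colorable 2 := by
  obtain _ | _ | n := n
  · exact m.elim0
  · exact (colorable_of_fintype _).mono (by simp)
  -- away from `m` the cycle is a path, coloured by the parity of the distance from `m`
  have hstep : ∀ v w : Fin (n + 2), v ≠ m → v - w = 1 → (v - m).val = (w - m).val + 1 := by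
    intro v w hv hvw
    have hsum : v - m = (w - m) + 1 := by rw [← hvw]; abel
    have hne : v - m ≠ 0 := sub_ne_zero.2 hv
    rw [hsum] at hne ⊢
    rw [Fin.val_add_one, if_neg fun h => hne (by rw [h, Fin.last_add_one])]
  refine ⟨Coloring.mk (fun v => ⟨(v - m).val % 2, Nat.mod_lt _ two_pos⟩) ?_⟩
  intro v w hvw heq
  obtain ⟨hadj, hv, hw⟩ := deleteIncidenceSet_adj.1 hvw
  have hpar := congrArg Fin.val heq
  dsimp only at hpar
  rcases cycleGraph_adj.1 hadj with h | h
  · have := hstep v w hv h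
    omega
  · have := hstep w v hw h
    omega

end SimpleGraph

theorem Fintype.exists_forall_ne_inr_of_card_lt [Fintype α] [Fintype γ] (f : α → β ⊕ γ)
    (h : Fintype.card α < Fintype.card γ) : ∃ c, ∀ a, f a ≠ Sum.inr c := by
  by_contra! hf
  choose s hs using hf
  refine (Fintype.card_le_of_injective s fun c c' hcc' => ?_).not_gt h
  exact Sum.inr_injective (by rw [← hs, ← hs, hcc'])

end

/-- If `H` has chromatic number `r + 1` with `r ≥ 3`, then there is a positive integer `g`
such that `H` is not homomorphic to `K_{r-2} + C_{2g+1}`. -/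
theorem statement11 {α : Type*} [Fintype α] (r : ℕ) (hr : 3 ≤ r) (H : SimpleGraph α)
    (hchi : H.chromaticNumber = (r + 1 : ℕ)) :
    ∃ g : ℕ, 0 < g ∧
      IsEmpty (H →g Join (completeGraph (Fin (r - 2))) (cycleGraph (2 * g + 1))) := by
  refine ⟨Fintype.card α + 1, Nat.succ_pos _, ⟨fun f => ?_⟩⟩
  obtain ⟨m, hm⟩ : ∃ m, ∀ v, f v ≠ Sum.inr m :=
    Fintype.exists_forall_ne_inr_of_card_lt f (by simp only [Fintype.card_fin]; omega)
  have hJoin := Join.colorable_add (completeGraph (Fin (r - 2))).colorable_of_fintype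
    (cycleGraph_deleteIncidenceSet_colorable_two _ m)
  rw [Fintype.card_fin, Nat.sub_add_cancel (by omega : 2 ≤ r)] at hJoin
  have hH : H.Colorable r :=
    ((hJoin.mono_left (Join.deleteIncidenceSet_inr_le _ _ m)).of_hom
      (f.toDeleteIncidenceSet _ hm))
  have hle := hH.chromaticNumber_le
  rw [hchi, Nat.cast_le] at hle
  omega
end

section
/- Let r ≥ 3 be an integer, let c ∈ (0, 1], and set k = 1 − 1/(r − 1 + c). Let G be a simple graph on n vertices with minimum degree strictly greater than k·n, let x_1, …, x_{r−2} be pairwise adjacent vertices of G, and let N be the set of common neighbours of x_1, …, x_{r−2}. Then |N| > ((r − 2)k − (r − 3))·n, and the subgraph of G induced on N has minimum degree strictly greater than (1 − 1/(1 + c))·|N|. -/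
open SimpleGraph

/-- Let `k = 1 - 1/(r - 1 + c)` and let `G` have minimum degree greater than `k * n`.
For pairwise adjacent vertices `x 1, …, x (r-2)` with common neighbourhood `N`:
`|N| > ((r-2) * k - (r-3)) * n`, and the induced subgraph on `N` has minimum degree
greater than `(1 - 1/(1 + c)) * |N|`. -/
theorem statement14 {V : Type*} [Fintype V] (r : ℕ) (hr : 3 ≤ r)
    (c : ℝ) (hc0 : 0 < c) (hc1 : c ≤ 1) (k : ℝ) (hk : k = 1 - 1 / ((r : ℝ) - 1 + c))
    (G : SimpleGraph V) [DecidableRel G.Adj]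
    (hdeg : k * (Fintype.card V : ℝ) < (G.minDegree : ℝ))
    (x : Fin (r - 2) → V) (hinj : Function.Injective x)
    (hadj : ∀ i j : Fin (r - 2), i ≠ j → G.Adj (x i) (x j)) :
    (((r : ℝ) - 2) * k - ((r : ℝ) - 3)) * (Fintype.card V : ℝ)
        < ({v : V | ∀ i, G.Adj (x i) v}.ncard : ℝ) ∧
      ∀ v : {v : V | ∀ i, G.Adj (x i) v},
        (1 - 1 / (1 + c)) * ({v : V | ∀ i, G.Adj (x i) v}.ncard : ℝ)
          < (((G.induce {v : V | ∀ i, G.Adj (x i) v}).neighborSet v).ncard : ℝ) := by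
  classical
  have hfin : Nonempty (Fin (r - 2)) := ⟨⟨0, by omega⟩⟩
  set n := Fintype.card V with hn
  set T : Finset V := Finset.univ.filter (fun v => ∀ i, G.Adj (x i) v) with hT
  have hSet : {v : V | ∀ i, G.Adj (x i) v} = (T : Set V) := by
    ext v; simp [hT]
  have hncard : ({v : V | ∀ i, G.Adj (x i) v}.ncard : ℝ) = (T.card : ℝ) := by
    rw [hSet, Set.ncard_coe_finset]
  have hr3 : (3:ℝ) ≤ (r:ℝ) := by exact_mod_cast hr
  have hden : (0:ℝ) < (r:ℝ) - 1 + c := by linarith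
  have h1c : (0:ℝ) < 1 + c := by linarith
  -- complement bound
  have hcompl : ((Tᶜ).card : ℝ) < ((r:ℝ) - 2) * ((1 - k) * n) := by
    have hsub : Tᶜ ⊆ Finset.univ.biUnion
        (fun i : Fin (r-2) => (G.neighborFinset (x i))ᶜ) := by
      intro v hv
      simp only [hT, Finset.mem_compl, Finset.mem_filter, Finset.mem_univ, true_and,
        not_forall] at hv
      obtain ⟨i, hi⟩ := hv
      simp only [Finset.mem_biUnion, Finset.mem_univ, Finset.mem_compl, mem_neighborFinset]
      exact ⟨i, trivial, hi⟩
    calc ((Tᶜ).card : ℝ) ≤ ∑ i : Fin (r-2), (((G.neighborFinset (x i))ᶜ).card : ℝ) := by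
          exact_mod_cast (Finset.card_le_card hsub).trans Finset.card_biUnion_le
      _ < ∑ _i : Fin (r-2), (1 - k) * (n:ℝ) := by
          apply Finset.sum_lt_sum_of_nonempty Finset.univ_nonempty
          intro i _
          have hd : G.minDegree ≤ G.degree (x i) := G.minDegree_le_degree (x i)
          have hd' : k * n < (G.degree (x i) : ℝ) := lt_of_lt_of_le hdeg (by exact_mod_cast hd)
          have hcard : (((G.neighborFinset (x i))ᶜ).card : ℝ) = n - G.degree (x i) := by
            rw [Finset.card_compl, card_neighborFinset_eq_degree]
            exact Nat.cast_sub (by rw [← card_neighborFinset_eq_degree]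
                                   exact Finset.card_le_univ _)
          rw [hcard]; linarith
      _ = ((r:ℝ)-2) * ((1-k)*n) := by
          rw [Finset.sum_const, Finset.card_univ, Fintype.card_fin, nsmul_eq_mul]
          have : ((r - 2 : ℕ) : ℝ) = (r:ℝ) - 2 := by
            push_cast [Nat.cast_sub (by omega : 2 ≤ r)]; ring
          rw [this]
  have hn' : (T.card : ℝ) + ((Tᶜ).card : ℝ) = n := by
    exact_mod_cast Finset.card_add_card_compl T
  have h1 : (((r:ℝ)-2)*k - ((r:ℝ)-3)) * n < (T.card : ℝ) := by nlinarith
  refine ⟨by rw [hncard]; exact h1, ?_⟩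
  rintro ⟨v, hv⟩
  have hvT : v ∈ T := by simp only [hT, Finset.mem_filter, Finset.mem_univ, true_and]; exact hv
  -- compute the induced neighbourhood cardinality
  set S : Set V := {v : V | ∀ i, G.Adj (x i) v} with hS
  have himg : Subtype.val '' ((G.induce S).neighborSet ⟨v, hv⟩)
      = ↑(G.neighborFinset v ∩ T) := by
    ext w
    simp only [Set.mem_image, mem_neighborSet, comap_adj, Function.Embedding.coe_subtype,
      Finset.coe_inter, Set.mem_inter_iff, Finset.mem_coe, mem_neighborFinset, hT,
      Finset.mem_filter, Finset.mem_univ, true_and]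
    constructor
    · rintro ⟨⟨w, hw⟩, hadj', rfl⟩
      exact ⟨hadj', hw⟩
    · rintro ⟨hadj', hw⟩
      exact ⟨⟨w, hw⟩, hadj', rfl⟩
  have hncard2 : (((G.induce S).neighborSet ⟨v, hv⟩).ncard : ℝ)
      = ((G.neighborFinset v ∩ T).card : ℝ) := by
    rw [← Set.ncard_image_of_injective _ Subtype.val_injective, himg, Set.ncard_coe_finset]
  -- degree bound
  have hsplit : (G.neighborFinset v ∩ T).card + (G.neighborFinset v \ T).card
      = G.degree v := by
    rw [Finset.card_inter_add_card_sdiff, card_neighborFinset_eq_degree]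
  have hsdiff : (G.neighborFinset v \ T) ⊆ Tᶜ := by
    intro w hw
    simp only [Finset.mem_sdiff] at hw
    simp [hw.2]
  have hsd : ((G.neighborFinset v \ T).card : ℝ) ≤ ((Tᶜ).card : ℝ) := by
    exact_mod_cast Finset.card_le_card hsdiff
  have hdv : k * n < (G.degree v : ℝ) :=
    lt_of_lt_of_le hdeg (by exact_mod_cast G.minDegree_le_degree v)
  have hsplit' : ((G.neighborFinset v ∩ T).card : ℝ)
      + ((G.neighborFinset v \ T).card : ℝ) = (G.degree v : ℝ) := by exact_mod_cast hsplit
  -- key inequality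
  have hid : ((r:ℝ)-2)*k - ((r:ℝ)-3) = (1+c)*(1-k) := by
    rw [hk]; field_simp; ring
  have hkey : (1+c)*((1-k)*n) < (T.card : ℝ) := by rw [hid] at h1; linarith [h1]; 
  have hdivkey : (1-k)*n < (T.card : ℝ) / (1+c) := by
    rw [lt_div_iff₀ h1c]; nlinarith
  have hTdiv : (1 - 1/(1+c)) * (T.card : ℝ) = (T.card : ℝ) - (T.card : ℝ)/(1+c) := by
    field_simp
  rw [hncard, hncard2, hTdiv]
  linarith
end

section
/- Let r ≥ 3 and g ≥ 1 be integers and let G be a simple graph on n vertices with minimum degree strictly greater than (1 − 1/(r − 1 + 2/(2g + 1)))·n. If G is not (r−2)-locally bipartite, then G contains a subgraph isomorphic to the join K_{r−2} + C_{2j+1} for some integer j with 1 ≤ j ≤ g. -/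
open SimpleGraph

/-- `G` is `a`-locally bipartite: the common neighbourhood of every `a`-clique
induces a bipartite (2-colourable) graph. -/
def LocallyBip {V : Type*} (a : ℕ) (G : SimpleGraph V) : Prop :=
  ∀ s : Finset V, G.IsNClique a s →
    (G.induce {v | ∀ u ∈ s, G.Adj u v}).Colorable 2

/-!
Pick an `(r-2)`-clique `s` whose common neighbourhood `N` is not bipartite, and a shortest odd
closed walk `C` in `G[N]`, of length `L`. Comparing `C` with the two closed walks obtained by
short-cutting it along any walk shows that `C` is a cycle on which two vertices with a common
neighbour are two steps apart, one way round or the other; so for `L ≥ 5` every vertex of `N`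
has at most two neighbours on `C`. If `L ≤ 2g+1`, then `s` and `C` span `K_{r-2} + C_L`.
Otherwise, with `n = |V|` and `δ` the minimum degree, double counting the edges between `C`
and `N` gives `L (δ - (n - |N|)) ≤ 2|N|`, while `n - |N| ≤ (r-2)(n - δ)`; for `L ≥ 2g+3`
these force `δ ≤ (1 - 1/(r - 1 + 2/(2g+1))) n`.
-/

open Finset

theorem le_one_sub_inv_mul_of_counting {n m δ k g L : ℝ}
    (hk : 0 ≤ k) (hg : 0 ≤ g) (hm : 0 ≤ m) (hL : 2 * g + 3 ≤ L) (hclique : n + k * δ ≤ m + k * n)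
    (hcycle : L * δ + L * m ≤ 2 * m + L * n) :
    δ ≤ (1 - 1 / (k + 1 + 2 / (2 * g + 1))) * n := by
  have hg' : 0 < 2 * g + 1 := by linarith
  have hexcess_mul : (2 * g + 1) * (m - (n - δ)) ≤ 2 * (n - δ) := by
    rcases le_total (n - δ) m with h | h
    · nlinarith [mul_le_mul_of_nonneg_right hL (sub_nonneg.2 h)]
    · nlinarith
  have hexcess : m - (n - δ) ≤ 2 / (2 * g + 1) * (n - δ) := by
    rw [div_mul_eq_mul_div, le_div_iff₀ hg']
    linarith
  have hρ : 0 < k + 1 + 2 / (2 * g + 1) := by positivity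
  have hn : n ≤ (k + 1 + 2 / (2 * g + 1)) * (n - δ) := by linarith
  rw [sub_mul, one_mul, div_mul_eq_mul_div, one_mul, le_sub_comm, div_le_iff₀ hρ]
  linarith

namespace SimpleGraph

variable {V : Type*} {H : SimpleGraph V} {x : V}

structure Walk.IsShortestOddClosed (w : H.Walk x x) : Prop where
  odd : Odd w.length
  le : ∀ ⦃y : V⦄ (c : H.Walk y y), Odd c.length → w.length ≤ c.length

theorem exists_isShortestOddClosed_of_not_colorable_two (h : ¬ H.Colorable 2) :
    ∃ (x : V) (w : H.Walk x x), w.IsShortestOddClosed := by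
  classical
  have hex : ∃ k, ∃ (x : V) (w : H.Walk x x), Odd w.length ∧ w.length = k := by
    simpa [two_colorable_iff_forall_loop_even] using h
  obtain ⟨x, w, hodd, hk⟩ := Nat.find_spec hex
  exact ⟨x, w, hodd, fun y c hc => hk ▸ Nat.find_min' hex ⟨y, c, hc, rfl⟩⟩

namespace Walk

theorem three_le_length_of_odd (w : H.Walk x x) (h : Odd w.length) : 3 ≤ w.length := by
  cases w with
  | nil => simp at h
  | cons hadj p =>
    cases p with
    | nil => exact absurd hadj (H.loopless.irrefl _)
    | cons _ q =>
      rw [Nat.odd_iff] at h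
      simp only [length_cons] at h ⊢
      omega

theorem adj_getVert_of_cycleGraph_adj (w : H.Walk x x) {i j : Fin w.length}
    (h : (cycleGraph w.length).Adj i j) : H.Adj (w.getVert i) (w.getVert j) := by
  suffices key : ∀ i j : Fin w.length, (j - i).val = 1 → H.Adj (w.getVert i) (w.getVert j) by
    rcases cycleGraph_adj'.mp h with h | h
    · exact (key j i h).symm
    · exact key i j h
  intro i j hij
  have hi := i.isLt
  have hj := j.isLt
  rw [Fin.val_sub] at hij
  rcases lt_or_ge (w.length - i + j) w.length with hlt | hge
  · rw [Nat.mod_eq_of_lt hlt] at hij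
    have hi' : i.val = w.length - 1 := by omega
    have hj' : j.val = 0 := by omega
    simpa [hi', hj', Nat.sub_add_cancel (by omega : 1 ≤ w.length)] using
      w.adj_getVert_succ (i := w.length - 1) (by omega)
  · rw [Nat.mod_eq_sub_mod hge, Nat.mod_eq_of_lt (by omega)] at hij
    have hj' : j.val = i.val + 1 := by omega
    simpa [hj'] using w.adj_getVert_succ (i := i) (by omega)

def cycleGraphHom (w : H.Walk x x) : cycleGraph w.length →g H where
  toFun i := w.getVert i
  map_rel' := w.adj_getVert_of_cycleGraph_adj

theorem exists_loops_of_walk_getVert (w : H.Walk x x) {p q : ℕ}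
    (hpq : p ≤ q) (hq : q ≤ w.length) (a : H.Walk (w.getVert q) (w.getVert p)) :
    (∃ c : H.Walk (w.getVert p) (w.getVert p), c.length = q - p + a.length) ∧
      ∃ c : H.Walk (w.getVert q) (w.getVert q), c.length = w.length - (q - p) + a.length := by
  have hend : (w.drop p).getVert (q - p) = w.getVert q := by
    rw [drop_getVert, Nat.add_sub_cancel' hpq]
  refine ⟨⟨(((w.drop p).take (q - p)).copy rfl hend).append a, ?_⟩,
    ⟨((w.drop q).append (w.take p)).append a.reverse, ?_⟩⟩
  · simp only [length_append, length_copy, take_length, drop_length]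
    omega
  · simp only [length_append, length_reverse, take_length, drop_length]
    omega

namespace IsShortestOddClosed

variable {w : H.Walk x x} (hw : w.IsShortestOddClosed)
include hw

theorem sub_le_of_even {p q : ℕ} (hpq : p ≤ q) (hq : q ≤ w.length)
    (a : H.Walk (w.getVert q) (w.getVert p)) (h : Even (q - p + a.length)) :
    q - p ≤ a.length := by
  obtain ⟨c, hc⟩ := (w.exists_loops_of_walk_getVert hpq hq a).2
  have hodd := hw.odd
  rw [Nat.even_iff] at h
  rw [Nat.odd_iff] at hodd
  have := hw.le c (by rw [hc, Nat.odd_iff]; omega)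
  omega

theorem length_le_of_odd {p q : ℕ} (hpq : p ≤ q) (hq : q ≤ w.length)
    (a : H.Walk (w.getVert q) (w.getVert p)) (h : Odd (q - p + a.length)) :
    w.length ≤ q - p + a.length := by
  obtain ⟨c, hc⟩ := (w.exists_loops_of_walk_getVert hpq hq a).1
  exact hc ▸ hw.le c (hc ▸ h)

theorem getVert_injOn {p q : ℕ} (hp : p < w.length) (hq : q < w.length)
    (h : w.getVert p = w.getVert q) : p = q := by
  wlog hpq : p ≤ q generalizing p q
  · exact (this hq hp h.symm (by omega)).symm
  have hnil : (Walk.nil.copy rfl h.symm : H.Walk (w.getVert q) (w.getVert p)).length = 0 := by simp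
  rcases Nat.even_or_odd (q - p) with he | ho
  · have := hw.sub_le_of_even hpq hq.le _ (by rwa [hnil])
    omega
  · have := hw.length_le_of_odd hpq hq.le _ (by rwa [hnil])
    omega

theorem sub_eq_two_or_of_adj {p q : ℕ} {v : V} (hpq : p < q) (hq : q < w.length)
    (hpv : H.Adj (w.getVert p) v) (hqv : H.Adj (w.getVert q) v) :
    q - p = 2 ∨ q - p = w.length - 2 := by
  let a : H.Walk (w.getVert q) (w.getVert p) := .cons hqv (.cons hpv.symm .nil)
  have ha : a.length = 2 := rfl
  have hodd := Nat.odd_iff.mp hw.odd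
  rcases Nat.even_or_odd (q - p) with he | ho
  · have := hw.sub_le_of_even hpq.le hq.le a (by rw [ha]; exact he.add even_two)
    rw [Nat.even_iff] at he
    omega
  · have := hw.length_le_of_odd hpq.le hq.le a (by rw [ha]; exact ho.add_even even_two)
    rw [Nat.odd_iff] at ho
    omega

theorem card_adj_getVert_le_two (h5 : 5 ≤ w.length) (v : V) [DecidablePred (H.Adj · v)] :
    #{i : Fin w.length | H.Adj (w.getVert i) v} ≤ 2 := by
  by_contra! hcard
  set S := ({i : Fin w.length | H.Adj (w.getVert i) v} : Finset _)
  let e := S.orderEmbOfFin rfl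
  have hadj (k : Fin #S) : H.Adj (w.getVert (e k)) v :=
    (mem_filter.mp (S.orderEmbOfFin_mem rfl k)).2
  have hlt (k l : Fin #S) (hkl : k < l) : (e k : ℕ) < e l := e.strictMono hkl
  let k₀ : Fin #S := ⟨0, by omega⟩
  let k₁ : Fin #S := ⟨1, by omega⟩
  let k₂ : Fin #S := ⟨2, by omega⟩
  have h01 := hlt k₀ k₁ (by simp [k₀, k₁, Fin.lt_def])
  have h12 := hlt k₁ k₂ (by simp [k₁, k₂, Fin.lt_def])
  have hL := (e k₂).isLt
  have d01 := hw.sub_eq_two_or_of_adj h01 (by omega) (hadj k₀) (hadj k₁)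
  have d12 := hw.sub_eq_two_or_of_adj h12 hL (hadj k₁) (hadj k₂)
  have d02 := hw.sub_eq_two_or_of_adj (h01.trans h12) hL (hadj k₀) (hadj k₂)
  have hodd := Nat.odd_iff.mp hw.odd
  omega

theorem sum_degree_getVert_le [Fintype V] [DecidableRel H.Adj] (h5 : 5 ≤ w.length) :
    ∑ i : Fin w.length, H.degree (w.getVert i) ≤ 2 * Fintype.card V := by
  calc ∑ i : Fin w.length, H.degree (w.getVert i)
      = ∑ v : V, #{i : Fin w.length | H.Adj (w.getVert i) v} := by
        simp only [← card_neighborFinset_eq_degree, neighborFinset_eq_filter, card_filter]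
        exact Finset.sum_comm
    _ ≤ ∑ _v : V, 2 := Finset.sum_le_sum fun v _ => hw.card_adj_getVert_le_two h5 v
    _ = 2 * Fintype.card V := by rw [sum_const, card_univ, smul_eq_mul, mul_comm]

def cycleCopy : Copy (cycleGraph w.length) H :=
  w.cycleGraphHom.toCopy fun i j h => Fin.ext (hw.getVert_injOn i.isLt j.isLt h)

end IsShortestOddClosed

end Walk

theorem copies_join_of_forall_adj {α β : Type*} {A : SimpleGraph α} {B : SimpleGraph β}
    {G : SimpleGraph V} (f : Copy A G) (g : Copy B G) (hfg : ∀ a b, G.Adj (f a) (g b)) :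
    Copies (Join A B) G := by
  refine ⟨⟨Sum.elim f g, ?_⟩, ?_⟩
  · rintro (a | b) (a' | b') h
    exacts [f.toHom.map_adj h, hfg a b', (hfg a' b).symm, g.toHom.map_adj h]
  · rintro (a | b) (a' | b') h
    · exact congrArg Sum.inl (f.injective h)
    · exact absurd (hfg a b') (by simp_all)
    · exact absurd (hfg a' b) (by simp_all)
    · exact congrArg Sum.inr (g.injective h)

theorem IsNClique.exists_copy_completeGraph {G : SimpleGraph V} {n : ℕ} {s : Finset V}
    (hs : G.IsNClique n s) : ∃ f : Copy (completeGraph (Fin n)) G, ∀ i, f i ∈ s := by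
  have e : completeGraph (Fin n) ↪g G.induce (s : Set V) := by
    rw [G.induce_eq_top.mpr hs.isClique]
    exact Embedding.completeGraph (s.equivFinOfCardEq hs.card_eq).symm.toEmbedding
  exact ⟨(Copy.induce G s).comp e.toCopy, fun i => ((e i).2 : _)⟩

variable [Fintype V] (G : SimpleGraph V) [DecidableRel G.Adj]

theorem degree_add_card_le_degree_induce_add_card (s : Set V) [DecidablePred (· ∈ s)]
    [DecidableRel (G.induce s).Adj] (v : s) :
    G.degree v + Fintype.card s ≤ (G.induce s).degree v + Fintype.card V := by
  classical
  have hsub : G.neighborFinset v ⊆ ((G.induce s).neighborFinset v).map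
      (Function.Embedding.subtype _) ∪ ({u | u ∉ s} : Finset V) := by
    intro u hu
    by_cases hus : u ∈ s
    · exact mem_union_left _ (mem_map.mpr ⟨⟨u, hus⟩, by simpa using hu, rfl⟩)
    · exact mem_union_right _ (by simpa using hus)
  have hcompl : #{u | u ∉ s} + Fintype.card s = Fintype.card V := by
    rw [Fintype.card_subtype, add_comm, card_filter_add_card_filter_not, card_univ]
  calc G.degree v + Fintype.card s
      ≤ (G.induce s).degree v + #{u | u ∉ s} + Fintype.card s := by
        gcongr
        rw [← card_neighborFinset_eq_degree, ← card_neighborFinset_eq_degree]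
        exact (card_le_card hsub).trans ((card_union_le _ _).trans_eq (by rw [card_map]))
    _ = (G.induce s).degree v + Fintype.card V := by rw [add_assoc, hcompl]

theorem card_add_mul_minDegree_le (s : Finset V) :
    Fintype.card V + #s * G.minDegree ≤
      #{v | ∀ u ∈ s, G.Adj u v} + #s * Fintype.card V := by
  have hcompl : #{v | ¬ ∀ u ∈ s, G.Adj u v} ≤ ∑ u ∈ s, #{v | ¬ G.Adj u v} := by
    classical
    exact (card_le_card fun v hv => by simpa using hv).trans card_biUnion_le
  have hnonadj (u : V) : #{v | ¬ G.Adj u v} + G.minDegree ≤ Fintype.card V := by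
    have := G.minDegree_le_degree u
    rw [← card_neighborFinset_eq_degree, neighborFinset_eq_filter] at this
    have := card_filter_add_card_filter_not (s := univ) fun v => G.Adj u v
    rw [card_univ] at this
    omega
  calc Fintype.card V + #s * G.minDegree
      = #{v | ∀ u ∈ s, G.Adj u v} + #{v | ¬ ∀ u ∈ s, G.Adj u v} + #s * G.minDegree := by
        rw [card_filter_add_card_filter_not, card_univ]
    _ ≤ #{v | ∀ u ∈ s, G.Adj u v} + ∑ u ∈ s, (#{v | ¬ G.Adj u v} + G.minDegree) := by
        rw [sum_add_distrib, sum_const, smul_eq_mul, ← add_assoc]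
        gcongr
    _ ≤ #{v | ∀ u ∈ s, G.Adj u v} + #s * Fintype.card V := by
        gcongr
        exact (sum_le_sum fun u _ => hnonadj u).trans_eq (by rw [sum_const, smul_eq_mul])

theorem mul_minDegree_add_le_of_isShortestOddClosed (s : Set V) [DecidablePred (· ∈ s)]
    [DecidableRel (G.induce s).Adj] {x : s} {w : (G.induce s).Walk x x}
    (hw : w.IsShortestOddClosed) (h5 : 5 ≤ w.length) :
    w.length * G.minDegree + w.length * Fintype.card s ≤
      2 * Fintype.card s + w.length * Fintype.card V := by
  calc w.length * G.minDegree + w.length * Fintype.card s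
      = ∑ _i : Fin w.length, (G.minDegree + Fintype.card s) := by
        rw [sum_const, card_univ, Fintype.card_fin, smul_eq_mul, mul_add]
    _ ≤ ∑ i : Fin w.length, ((G.induce s).degree (w.getVert i) + Fintype.card V) :=
        sum_le_sum fun i _ => (Nat.add_le_add_right (G.minDegree_le_degree _) _).trans
          (G.degree_add_card_le_degree_induce_add_card s _)
    _ ≤ 2 * Fintype.card s + w.length * Fintype.card V := by
        rw [sum_add_distrib, sum_const, card_univ, Fintype.card_fin, smul_eq_mul]
        gcongr
        exact hw.sum_degree_getVert_le h5

theorem minDegree_le_of_isNClique_of_isShortestOddClosed {k g : ℕ} (hg : 1 ≤ g) {s : Finset V}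
    (hs : G.IsNClique k s) {x : {v | ∀ u ∈ s, G.Adj u v}}
    {w : (G.induce {v | ∀ u ∈ s, G.Adj u v}).Walk x x} (hw : w.IsShortestOddClosed)
    (hL : 2 * g + 3 ≤ w.length) :
    (G.minDegree : ℝ) ≤ (1 - 1 / ((k : ℝ) + 1 + 2 / (2 * g + 1))) * Fintype.card V := by
  classical
  have hcycle := G.mul_minDegree_add_le_of_isShortestOddClosed _ hw (by omega)
  have hclique := G.card_add_mul_minDegree_le s
  rw [hs.card_eq, ← Set.toFinset_ofPred, Set.toFinset_card] at hclique
  exact le_one_sub_inv_mul_of_counting (m := Fintype.card {v | ∀ u ∈ s, G.Adj u v})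
    (L := w.length) (by positivity) (by positivity) (by positivity) (by exact_mod_cast hL)
    (by exact_mod_cast hclique) (by exact_mod_cast hcycle)

end SimpleGraph

/-- If `G` on `n` vertices has minimum degree greater than
`(1 - 1/(r - 1 + 2/(2g+1))) * n` and is not `(r-2)`-locally bipartite, then `G` contains
`K_{r-2} + C_{2j+1}` for some `1 ≤ j ≤ g`. -/
theorem statement15 {V : Type*} [Fintype V] (r g : ℕ) (hr : 3 ≤ r) (hg : 1 ≤ g)
    (G : SimpleGraph V) [DecidableRel G.Adj]
    (hdeg : (1 - 1 / ((r : ℝ) - 1 + 2 / (2 * (g : ℝ) + 1))) * (Fintype.card V : ℝ)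
      < (G.minDegree : ℝ))
    (hnlb : ¬ LocallyBip (r - 2) G) :
    ∃ j : ℕ, 1 ≤ j ∧ j ≤ g ∧
      Copies (Join (completeGraph (Fin (r - 2))) (cycleGraph (2 * j + 1))) G := by
  obtain ⟨s, hs, hN⟩ : ∃ s, G.IsNClique (r - 2) s ∧
      ¬ (G.induce {v | ∀ u ∈ s, G.Adj u v}).Colorable 2 := by
    simpa [LocallyBip] using hnlb
  obtain ⟨x, w, hw⟩ := exists_isShortestOddClosed_of_not_colorable_two hN
  obtain ⟨j, hj⟩ := hw.odd
  by_cases hL : w.length ≤ 2 * g + 1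
  · have h3 := w.three_le_length_of_odd hw.odd
    obtain ⟨f, hf⟩ := hs.exists_copy_completeGraph
    refine ⟨j, by omega, by omega, hj ▸ copies_join_of_forall_adj f
      ((Copy.induce G _).comp hw.cycleCopy) fun a b => (hw.cycleCopy b).2 _ (hf a)⟩
  · have hk : ((r - 2 : ℕ) : ℝ) + 1 = r - 1 := by
      rw [Nat.cast_sub (by omega)]
      ring
    have hδ := G.minDegree_le_of_isNClique_of_isShortestOddClosed hg hs hw (by omega)
    rw [hk] at hδ
    exact absurd hdeg hδ.not_gt
end
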